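/- arXiv:1006.4583 — 2 statements merged into one kernel-verified Lean document; each statement's English description precedes it below -/
import Mathlib

section
/- For the SL(2)-type cluster data, the explicit map Ξ_{s₁}(y₀, y₁, t) = (y₀·(1 + y₁⁻¹)⁻¹·(1 + y₁⁻¹t)⁻¹, y₁⁻¹t, t) on (ℂ*)³ (defined where 1 + y₁⁻¹ ≠ 0 and 1 + y₁⁻¹t ≠ 0) is Poisson from the bracket {y₀,y₁} = y₀y₁, {y₀,t} = {y₁,t} = 0 to the bracket {z₀,z₁} = −z₀z₁, {z₀,t} = {z₁,t} = 0. -/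
/-!
The map `Ξ_{s₁}` is triangular: `z₁ = y₁⁻¹ t` and `t` do not depend on `y₀`, so every pullback
bracket loses its term containing `∂z₀/∂y₁`, and the brackets involving `t` vanish outright.
The remaining bracket is `y₀ y₁ ∂z₀/∂y₀ ∂z₁/∂y₁`, and since `z₀` is linear in `y₀` while `z₁` is
homogeneous of degree `-1` in `y₁`, we have `y₀ ∂z₀/∂y₀ = z₀` and `y₁ ∂z₁/∂y₁ = -z₁`, whose
product is `-z₀ z₁`.
-/

variable {𝕜 : Type*} [NontriviallyNormedField 𝕜]

theorem mul_deriv_mul_const_mul_const (c d x : 𝕜) :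
    x * deriv (fun a : 𝕜 => a * c * d) x = x * c * d := by
  simp [mul_assoc]

theorem mul_deriv_inv_mul_const {x : 𝕜} (hx : x ≠ 0) (t : 𝕜) :
    x * deriv (fun b : 𝕜 => b⁻¹ * t) x = -(x⁻¹ * t) := by
  simp only [deriv_mul_const_field', deriv_inv]
  field_simp

theorem Xi_s1_poisson_general (y₀ y₁ t : ℂ) (h₁ : y₁ ≠ 0) :
    (deriv (fun a : ℂ => a * (1 + y₁⁻¹)⁻¹ * (1 + y₁⁻¹ * t)⁻¹) y₀ *
            deriv (fun b : ℂ => b⁻¹ * t) y₁ -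
          deriv (fun b : ℂ => y₀ * (1 + b⁻¹)⁻¹ * (1 + b⁻¹ * t)⁻¹) y₁ *
            deriv (fun _ : ℂ => y₁⁻¹ * t) y₀) * (y₀ * y₁) =
        -((y₀ * (1 + y₁⁻¹)⁻¹ * (1 + y₁⁻¹ * t)⁻¹) * (y₁⁻¹ * t)) ∧
      (deriv (fun a : ℂ => a * (1 + y₁⁻¹)⁻¹ * (1 + y₁⁻¹ * t)⁻¹) y₀ *
            deriv (fun _ : ℂ => t) y₁ -
          deriv (fun b : ℂ => y₀ * (1 + b⁻¹)⁻¹ * (1 + b⁻¹ * t)⁻¹) y₁ *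
            deriv (fun _ : ℂ => t) y₀) * (y₀ * y₁) = 0 ∧
      (deriv (fun _ : ℂ => y₁⁻¹ * t) y₀ * deriv (fun _ : ℂ => t) y₁ -
          deriv (fun b : ℂ => b⁻¹ * t) y₁ * deriv (fun _ : ℂ => t) y₀) * (y₀ * y₁) = 0 := by
  simp only [deriv_const', mul_zero, sub_zero, zero_mul, sub_self, and_true]
  calc _ = (y₀ * deriv (fun a : ℂ => a * (1 + y₁⁻¹)⁻¹ * (1 + y₁⁻¹ * t)⁻¹) y₀) *
          (y₁ * deriv (fun b : ℂ => b⁻¹ * t) y₁) := by ring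
    _ = _ := by rw [mul_deriv_mul_const_mul_const, mul_deriv_inv_mul_const h₁, mul_neg]

/-- The map `Ξ_{s₁}(y₀,y₁,t) = (y₀(1+y₁⁻¹)⁻¹(1+y₁⁻¹t)⁻¹, y₁⁻¹t, t)` is Poisson from
the bracket `{y₀,y₁} = y₀y₁`, `{y₀,t} = {y₁,t} = 0` to the bracket
`{z₀,z₁} = -z₀z₁`, `{z₀,t} = {z₁,t} = 0`: the chain-rule pullback brackets of the
component functions agree with the target brackets. -/
theorem Xi_s1_poisson (y₀ y₁ t : ℂ) (h₀ : y₀ ≠ 0) (h₁ : y₁ ≠ 0) (ht : t ≠ 0)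
    (ha : 1 + y₁⁻¹ ≠ 0) (hb : 1 + y₁⁻¹ * t ≠ 0) :
    (deriv (fun a : ℂ => a * (1 + y₁⁻¹)⁻¹ * (1 + y₁⁻¹ * t)⁻¹) y₀ *
            deriv (fun b : ℂ => b⁻¹ * t) y₁ -
          deriv (fun b : ℂ => y₀ * (1 + b⁻¹)⁻¹ * (1 + b⁻¹ * t)⁻¹) y₁ *
            deriv (fun _ : ℂ => y₁⁻¹ * t) y₀) * (y₀ * y₁) =
        -((y₀ * (1 + y₁⁻¹)⁻¹ * (1 + y₁⁻¹ * t)⁻¹) * (y₁⁻¹ * t)) ∧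
      (deriv (fun a : ℂ => a * (1 + y₁⁻¹)⁻¹ * (1 + y₁⁻¹ * t)⁻¹) y₀ *
            deriv (fun _ : ℂ => t) y₁ -
          deriv (fun b : ℂ => y₀ * (1 + b⁻¹)⁻¹ * (1 + b⁻¹ * t)⁻¹) y₁ *
            deriv (fun _ : ℂ => t) y₀) * (y₀ * y₁) = 0 ∧
      (deriv (fun _ : ℂ => y₁⁻¹ * t) y₀ * deriv (fun _ : ℂ => t) y₁ -
          deriv (fun b : ℂ => b⁻¹ * t) y₁ * deriv (fun _ : ℂ => t) y₀) * (y₀ * y₁) = 0 :=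
  Xi_s1_poisson_general y₀ y₁ t h₁
end

section
/- The two twisted evaluations for PGL(2,ℂ) are intertwined by the explicit mutation: with êv_{1̄1}(y₀,y₁,t) the matrix with entries [t⁻¹(1+y₁)+1, −y₀y₁t⁻¹; y₀⁻¹((1+y₁⁻¹)+t⁻¹(1+y₁)), −y₁t⁻¹] (after rescaling by t^{1/2}) and êv_{11}(z₀,z₁,t) the matrix with entries [(1+z₁⁻¹)+t⁻¹, −z₀((1+z₁⁻¹)+(1+z₁)t⁻¹); z₀⁻¹z₁⁻¹, −z₁⁻¹] (after rescaling by t^{1/2}), the substitution z₀ = y₀(1+y₁⁻¹)⁻¹(1+y₁⁻¹t)⁻¹, z₁ = y₁⁻¹t makes êv_{11}(z₀,z₁,t) equal to êv_{1̄1}(y₀,y₁,t) as matrices, wherever all expressions are defined and nonzero. -/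
open Matrix

/-- The substitution `z₀ = y₀(1+y₁⁻¹)⁻¹(1+y₁⁻¹t)⁻¹`, `z₁ = y₁⁻¹t` makes the (rescaled)
twisted evaluation `êv₁₁(z₀,z₁,t)` equal to `êv_{1̄1}(y₀,y₁,t)` as matrices. -/
theorem ev11_eq_ev1bar1 (y₀ y₁ t : ℂ) (h₀ : y₀ ≠ 0) (h₁ : y₁ ≠ 0) (ht : t ≠ 0)
    (ha : 1 + y₁⁻¹ ≠ 0) (hb : 1 + y₁⁻¹ * t ≠ 0) :
    (let z₀ : ℂ := y₀ * (1 + y₁⁻¹)⁻¹ * (1 + y₁⁻¹ * t)⁻¹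
     let z₁ : ℂ := y₁⁻¹ * t
     !![(1 + z₁⁻¹) * t + 1, -(z₀ * ((1 + z₁⁻¹) * t + (1 + z₁)));
        z₀⁻¹ * z₁⁻¹ * t, -(z₁⁻¹ * t)]) =
      !![(1 + y₁) + t, -(y₀ * y₁);
         y₀⁻¹ * (t * (1 + y₁⁻¹) + (1 + y₁)), -y₁] := by
  have h1' : y₁ + 1 ≠ 0 := by
    intro h; apply ha; field_simp; linear_combination h
  have hb' : y₁ + t ≠ 0 := by
    intro h; apply hb; field_simp; linear_combination h
  have e1 : (1 + (y₁⁻¹ * t)⁻¹) * t + 1 = (1 + y₁) + t := by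
    field_simp
    ring
  have e2 : -(y₀ * (1 + y₁⁻¹)⁻¹ * (1 + y₁⁻¹ * t)⁻¹ *
      ((1 + (y₁⁻¹ * t)⁻¹) * t + (1 + y₁⁻¹ * t))) = -(y₀ * y₁) := by
    field_simp
    ring
  have e3 : (y₀ * (1 + y₁⁻¹)⁻¹ * (1 + y₁⁻¹ * t)⁻¹)⁻¹ * (y₁⁻¹ * t)⁻¹ * t
      = y₀⁻¹ * (t * (1 + y₁⁻¹) + (1 + y₁)) := by
    rw [_root_.mul_inv_rev, _root_.mul_inv_rev, inv_inv, inv_inv, _root_.mul_inv_rev, inv_inv]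
    field_simp
    ring
  have e4 : -((y₁⁻¹ * t)⁻¹ * t) = -y₁ := by
    field_simp
  show !![_,_;_,_] = _
  rw [e1, e2, e3, e4]
end
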